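/- For every β > 0 and all a₀, a₁ > 0, inf { ∫₀¹ a'(s)²/(β a(s)) ds : a : [0,1] → ℝ absolutely continuous with square-integrable derivative, a > 0 on [0,1], a(0) = a₀, a(1) = a₁ } = (4/β)·(√a₁ − √a₀)². -/

import Mathlib

/-!
The upper bound is attained by the geodesic `a = ((1 - s) √a₀ + s √a₁)²`, along which
`a'² / a = 4 (√a₁ - √a₀)²` is constant. For the lower bound, completing the square gives
`a'² / a ≥ 4 (a' ψ - a ψ²)` for every `ψ`; when `ψ' = -ψ²` the right-hand side is `4 (a ψ)'`,
so integrating yields `4 (a(1) ψ(1) - a(0) ψ(0))`. The solution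
`ψ = (√a₁ - √a₀) / ((1 - s) √a₀ + s √a₁)` turns this into `4 (√a₁ - √a₀)²`; this duality argument
needs only integration by parts, not a chain rule for `√a`.
-/

open MeasureTheory Set AffineMap

theorem four_mul_sub_le_sq_div (x y a : ℝ) (ha : 0 < a) :
    4 * (x * y - a * y ^ 2) ≤ x ^ 2 / a := by
  have hsq : x ^ 2 / a - 4 * (x * y - a * y ^ 2) = (x - 2 * a * y) ^ 2 / a := by
    field_simp; ring
  linarith [div_nonneg (sq_nonneg (x - 2 * a * y)) ha.le]

theorem Continuous.memLp_restrict_of_isCompact {μ : Measure ℝ} [IsFiniteMeasureOnCompacts μ]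
    {f : ℝ → ℝ} (hf : Continuous f) {K : Set ℝ} (hK : IsCompact K) (p : ENNReal) :
    MemLp f p (μ.restrict K) := by
  have : IsFiniteMeasure (μ.restrict K) := isFiniteMeasure_restrict.2 hK.measure_ne_top
  obtain ⟨C, hC⟩ := hK.exists_bound_of_continuousOn hf.continuousOn
  exact MemLp.of_bound hf.aestronglyMeasurable C (ae_restrict_of_forall_mem hK.measurableSet hC)

theorem MeasureTheory.MemLp.integrableOn_sq_div {μ : Measure ℝ} {f g : ℝ → ℝ} {K : Set ℝ}
    (hf : MemLp f 2 (μ.restrict K)) (hK : IsCompact K) (hg : ContinuousOn g K)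
    (hg0 : ∀ x ∈ K, g x ≠ 0) :
    IntegrableOn (fun x => f x ^ 2 / g x) K μ := by
  simpa only [div_eq_mul_inv] using
    IntegrableOn.mul_continuousOn (g' := fun x => (g x)⁻¹) hf.integrable_sq (hg.inv₀ hg0) hK

theorem continuousOn_of_eq_add_primitive {f f' : ℝ → ℝ} {a b : ℝ}
    (hf : ∀ x ∈ uIcc a b, f x = f a + ∫ t in a..x, f' t) (hf' : IntervalIntegrable f' volume a b) :
    ContinuousOn f (uIcc a b) :=
  (continuousOn_const.add (intervalIntegral.continuousOn_primitive_interval'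
    hf' left_mem_uIcc)).congr hf

theorem integral_mul_add_mul_deriv_eq_sub {f f' g : ℝ → ℝ} {a b : ℝ}
    (hf : ∀ x ∈ uIcc a b, f x = f a + ∫ t in a..x, f' t) (hf' : IntervalIntegrable f' volume a b)
    (hg : AbsolutelyContinuousOnInterval g a b) :
    ∫ x in a..b, f' x * g x + f x * deriv g x = f b * g b - f a * g a := by
  set F : ℝ → ℝ := fun x => f a + ∫ t in a..x, f' t
  have hF : AbsolutelyContinuousOnInterval F a b :=
    (LipschitzWith.const (f a)).lipschitzOnWith.absolutelyContinuousOnInterval.add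
      (hf'.absolutelyContinuousOnInterval_intervalIntegral left_mem_uIcc)
  have hFa : F a = f a := by simp [F]
  have hFb : F b = f b := (hf b right_mem_uIcc).symm
  rw [← hFa, ← hFb, ← hF.integral_deriv_mul_eq_sub hg]
  refine intervalIntegral.integral_congr_ae ?_
  filter_upwards [hf'.ae_hasDerivAt_integral] with x hx hxab
  have hx' := uIoc_subset_uIcc hxab
  rw [((hx hx' a left_mem_uIcc).const_add (f a)).deriv, hf x hx']

theorem lineMap_pos {b₀ b₁ s : ℝ} (h₀ : 0 < b₀) (h₁ : 0 < b₁) (hs : s ∈ Icc (0:ℝ) 1) :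
    0 < lineMap b₀ b₁ s :=
  (convex_Ioi (0:ℝ)).lineMap_mem (x := b₀) (y := b₁) h₀ h₁ hs

theorem sq_lineMap_eq_add_integral (b₀ b₁ s : ℝ) :
    lineMap b₀ b₁ s ^ 2 = b₀ ^ 2 + ∫ t in (0:ℝ)..s, 2 * (b₁ - b₀) * lineMap b₀ b₁ t := by
  have hderiv : ∀ t, HasDerivAt (fun t => lineMap b₀ b₁ t ^ 2)
      (2 * (b₁ - b₀) * lineMap b₀ b₁ t) t := fun t =>
    ((hasDerivAt_lineMap (𝕜 := ℝ) (a := b₀) (b := b₁) (x := t)).pow 2).congr_deriv (by ring)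
  rw [intervalIntegral.integral_eq_sub_of_hasDerivAt (fun t _ => hderiv t)
    ((by fun_prop : Continuous fun t => 2 * (b₁ - b₀) * lineMap b₀ b₁ t).intervalIntegrable _ _)]
  simp

theorem hasDerivAt_div_lineMap {b₀ b₁ t : ℝ} (ht : lineMap b₀ b₁ t ≠ 0) :
    HasDerivAt (fun s => (b₁ - b₀) / lineMap b₀ b₁ s) (-((b₁ - b₀) / lineMap b₀ b₁ t) ^ 2) t :=
  ((hasDerivAt_const t (b₁ - b₀)).div (hasDerivAt_lineMap (𝕜 := ℝ) (a := b₀) (b := b₁))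
    ht).congr_deriv (by field_simp; ring)

theorem four_mul_sq_sqrt_sub_le_integral {a a' : ℝ → ℝ}
    (ha : ∀ s ∈ Icc (0:ℝ) 1, a s = a 0 + ∫ t in (0:ℝ)..s, a' t)
    (ha' : MemLp a' 2 (volume.restrict (Icc 0 1)))
    (hpos : ∀ s ∈ Icc (0:ℝ) 1, 0 < a s) :
    4 * (√(a 1) - √(a 0)) ^ 2 ≤ ∫ s in (0:ℝ)..1, a' s ^ 2 / a s := by
  rw [← uIcc_of_le zero_le_one] at ha ha' hpos
  have : IsFiniteMeasure (volume.restrict (uIcc (0:ℝ) 1)) :=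
    isFiniteMeasure_restrict.2 isCompact_uIcc.measure_ne_top
  have ha'_int : IntervalIntegrable a' volume 0 1 :=
    IntegrableOn.intervalIntegrable (ha'.integrable one_le_two)
  have hcont : ContinuousOn a (uIcc 0 1) := continuousOn_of_eq_add_primitive ha ha'_int
  set b₀ := √(a 0)
  set b₁ := √(a 1)
  have hb₀ : 0 < b₀ := Real.sqrt_pos.2 (hpos 0 left_mem_uIcc)
  have hb₁ : 0 < b₁ := Real.sqrt_pos.2 (hpos 1 right_mem_uIcc)
  have hr : ∀ s ∈ uIcc (0:ℝ) 1, lineMap b₀ b₁ s ≠ 0 := fun s hs =>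
    (lineMap_pos hb₀ hb₁ (by rwa [uIcc_of_le zero_le_one] at hs)).ne'
  set ψ : ℝ → ℝ := fun s => (b₁ - b₀) / lineMap b₀ b₁ s
  have hψ : AbsolutelyContinuousOnInterval ψ 0 1 :=
    ContDiffOn.absolutelyContinuousOnInterval (by fun_prop (disch := exact hr))
  have hψ' : ∀ s ∈ uIcc (0:ℝ) 1, deriv ψ s = -ψ s ^ 2 := fun s hs =>
    (hasDerivAt_div_lineMap (hr s hs)).deriv
  have hdual : ∫ s in (0:ℝ)..1, a' s * ψ s - a s * ψ s ^ 2 = (b₁ - b₀) ^ 2 := by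
    have ha₀ : a 0 = b₀ ^ 2 := (Real.sq_sqrt (hpos 0 left_mem_uIcc).le).symm
    have ha₁ : a 1 = b₁ ^ 2 := (Real.sq_sqrt (hpos 1 right_mem_uIcc).le).symm
    calc _ = ∫ s in (0:ℝ)..1, a' s * ψ s + a s * deriv ψ s :=
          intervalIntegral.integral_congr fun s hs => by simp only [hψ' s hs]; ring
      _ = a 1 * ψ 1 - a 0 * ψ 0 := integral_mul_add_mul_deriv_eq_sub ha ha'_int hψ
      _ = (b₁ - b₀) ^ 2 := by
          simp only [ψ, lineMap_apply_zero, lineMap_apply_one, ha₀, ha₁]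
          field_simp
  have hsq : IntervalIntegrable (fun s => a' s ^ 2 / a s) volume 0 1 :=
    (ha'.integrableOn_sq_div isCompact_uIcc hcont fun s hs =>
      (hpos s hs).ne').intervalIntegrable
  calc 4 * (b₁ - b₀) ^ 2 = ∫ s in (0:ℝ)..1, 4 * (a' s * ψ s - a s * ψ s ^ 2) := by
        rw [intervalIntegral.integral_const_mul, hdual]
    _ ≤ ∫ s in (0:ℝ)..1, a' s ^ 2 / a s := by
        refine intervalIntegral.integral_mono_on zero_le_one
          (((ha'_int.mul_continuousOn hψ.continuousOn).sub
            (hcont.mul (hψ.continuousOn.pow 2)).intervalIntegrable).const_mul 4) hsq fun s hs => ?_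
        exact four_mul_sub_le_sq_div _ _ _ (hpos s (by rwa [uIcc_of_le zero_le_one]))

theorem hellinger_oneMassPoint_cost (β a₀ a₁ : ℝ) (hβ : 0 < β)
    (ha₀ : 0 < a₀) (ha₁ : 0 < a₁) :
    sInf { I : ℝ | ∃ a ad : ℝ → ℝ,
        (∀ s ∈ Icc (0:ℝ) 1, a s = a₀ + ∫ t in (0:ℝ)..s, ad t) ∧
        MemLp ad 2 (volume.restrict (Icc (0:ℝ) 1)) ∧
        (∀ s ∈ Icc (0:ℝ) 1, 0 < a s) ∧ a 0 = a₀ ∧ a 1 = a₁ ∧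
        I = ∫ s in (0:ℝ)..1, (ad s)^2 / (β * a s) }
      = (4 / β) * (Real.sqrt a₁ - Real.sqrt a₀)^2 := by
  set b₀ := √a₀
  set b₁ := √a₁
  have hb₀ : 0 < b₀ := Real.sqrt_pos.2 ha₀
  have hb₁ : 0 < b₁ := Real.sqrt_pos.2 ha₁
  have hr : ∀ s ∈ Icc (0:ℝ) 1, 0 < lineMap b₀ b₁ s := fun s hs => lineMap_pos hb₀ hb₁ hs
  refine IsLeast.csInf_eq ⟨⟨fun s => lineMap b₀ b₁ s ^ 2,
    fun s => 2 * (b₁ - b₀) * lineMap b₀ b₁ s, fun s _ => ?_,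
    (by fun_prop : Continuous _).memLp_restrict_of_isCompact isCompact_Icc 2,
    fun s hs => pow_pos (hr s hs) 2, ?_, ?_, ?_⟩, ?_⟩
  · simp only [sq_lineMap_eq_add_integral, b₀, Real.sq_sqrt ha₀.le]
  · simp [b₀, Real.sq_sqrt ha₀.le]
  · simp [b₁, Real.sq_sqrt ha₁.le]
  · rw [intervalIntegral.integral_congr (g := fun _ => 4 / β * (b₁ - b₀) ^ 2) fun s hs => ?_]
    · simp
    · rw [uIcc_of_le zero_le_one] at hs
      have := (hr s hs).ne'
      field_simp
      ring
  · rintro _ ⟨a, a', ha, ha', hpos, rfl, rfl, rfl⟩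
    calc 4 / β * (√(a 1) - √(a 0)) ^ 2 = 4 * (√(a 1) - √(a 0)) ^ 2 / β := by ring
      _ ≤ (∫ s in (0:ℝ)..1, a' s ^ 2 / a s) / β :=
        div_le_div_of_nonneg_right (four_mul_sq_sqrt_sub_le_integral ha ha' hpos) hβ.le
      _ = ∫ s in (0:ℝ)..1, a' s ^ 2 / (β * a s) := by
        rw [← intervalIntegral.integral_div]
        simp only [div_div, mul_comm]
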